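/- Let α and β be finite nonempty index types and let ρ : Matrix (α × β) (α × β) ℂ be positive semidefinite. Then the partial transpose ρ^{T_B} satisfies −(trace(ρ).re/2)·1 ⪯ ρ^{T_B} ⪯ trace(ρ).re·1 in the Loewner order; that is, both matrices trace(ρ).re·1 − ρ^{T_B} and ρ^{T_B} + (trace(ρ).re/2)·1 are positive semidefinite. -/

import Mathlib

/-!
Write `ρ = ∑ ψᵢ ψᵢᴴ`; both bounds are additive in `ρ`, so it suffices to treat one term `ψ ψᴴ`.
Reading `x` and `ψ` as `α × β` matrices `X`, `Ψ` (so `tr (ψ ψᴴ) = ‖Ψ‖²`), the quadratic form of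
`(ψ ψᴴ)^{T_B}` at `x` is the Frobenius inner product `⟪Mᵀ, M⟫` with `M = Xᴴ Ψ`. Polarization gives
`-‖M - Mᵀ‖² / 4 ≤ Re ⟪Mᵀ, M⟫ ≤ ‖M‖²`, and `‖M‖ ≤ ‖X‖ ‖Ψ‖`. The lower bound `-‖X‖² ‖Ψ‖² / 2` comes
from `‖M - Mᵀ‖ ≤ √2 ‖X‖ ‖Ψ‖`: `M - Mᵀ` is a sum over `α` of the matrices `u vᵀ - v uᵀ`, and for
these `⟪(u vᵀ)ᵀ, u vᵀ⟫ = |u ⬝ᵥ v̄|² ≥ 0` gives `‖u vᵀ - v uᵀ‖ ≤ √2 ‖u‖ ‖v‖`; Cauchy–Schwarz over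
`α` does the rest.
-/

open Matrix BigOperators ComplexOrder

/-- Partial transpose on the second tensor factor. -/
def ptB {α β : Type*} (M : Matrix (α × β) (α × β) ℂ) : Matrix (α × β) (α × β) ℂ :=
  fun p q => M (p.1, q.2) (q.1, p.2)

attribute [local instance] Matrix.frobeniusNormedAddCommGroup

namespace Matrix

variable {m n : Type*}

lemma isHermitian_real_smul_one [DecidableEq n] (c : ℝ) :
    ((c : ℂ) • (1 : Matrix n n ℂ)).IsHermitian :=
  isHermitian_one.smul (Complex.conj_ofReal c)

variable [Fintype n]

lemma mul_eq_sum_vecMulVec {R : Type*} [NonUnitalNonAssocSemiring R] (A : Matrix m n R)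
    (B : Matrix n m R) : A * B = ∑ k, vecMulVec (fun i => A i k) (B k) := by
  ext i j
  simp [mul_apply, sum_apply, vecMulVec_apply]

/-- The Frobenius inner product `⟪Mᵀ, M⟫ = tr ((Mᵀ)ᴴ M)`. -/
def transposeInner (M : Matrix n n ℂ) : ℂ := ∑ i, ∑ j, M i j * star (M j i)

lemma transposeInner_vecMulVec (u v : n → ℂ) :
    transposeInner (vecMulVec u v) = Complex.normSq (u ⬝ᵥ star v) := by
  rw [← Complex.mul_conj, dotProduct, map_sum, Finset.sum_mul_sum]
  simp only [transposeInner, vecMulVec_apply, Pi.star_apply, Complex.star_def, map_mul,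
    Complex.conj_conj]
  exact Finset.sum_congr rfl fun i _ => Finset.sum_congr rfl fun j _ => by ring

variable [Fintype m]

lemma frobenius_norm_sq_eq_sum_rows {E : Type*} [NormedAddCommGroup E] (A : Matrix m n E) :
    ‖A‖ ^ 2 = ∑ i, ‖WithLp.toLp 2 (A i)‖ ^ 2 := by
  change ‖WithLp.toLp 2 fun i => WithLp.toLp 2 (A i)‖ ^ 2 = _
  rw [PiLp.norm_sq_eq_of_L2]

lemma frobenius_norm_sq_eq_sum {E : Type*} [NormedAddCommGroup E] (A : Matrix m n E) :
    ‖A‖ ^ 2 = ∑ i, ∑ j, ‖A i j‖ ^ 2 := by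
  simp [frobenius_norm_sq_eq_sum_rows, PiLp.norm_sq_eq_of_L2]

lemma frobenius_norm_sub_transpose_sq (M : Matrix n n ℂ) :
    ‖M - Mᵀ‖ ^ 2 = 2 * ‖M‖ ^ 2 - 2 * (transposeInner M).re := by
  have hT : ∑ i, ∑ j, ‖M j i‖ ^ 2 = ∑ i, ∑ j, ‖M i j‖ ^ 2 := Finset.sum_comm
  simp only [frobenius_norm_sq_eq_sum, transposeInner, sub_apply, transpose_apply,
    Complex.sq_norm, Complex.normSq_sub, Complex.re_sum, Complex.star_def,
    Finset.sum_sub_distrib, Finset.sum_add_distrib, ← Finset.mul_sum] at hT ⊢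
  rw [hT]
  ring

lemma frobenius_norm_add_transpose_sq (M : Matrix n n ℂ) :
    ‖M + Mᵀ‖ ^ 2 = 2 * ‖M‖ ^ 2 + 2 * (transposeInner M).re := by
  have hT : ∑ i, ∑ j, ‖M j i‖ ^ 2 = ∑ i, ∑ j, ‖M i j‖ ^ 2 := Finset.sum_comm
  simp only [frobenius_norm_sq_eq_sum, transposeInner, add_apply, transpose_apply,
    Complex.sq_norm, Complex.normSq_add, Complex.re_sum, Complex.star_def,
    Finset.sum_add_distrib, ← Finset.mul_sum] at hT ⊢
  rw [hT]
  ring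

lemma re_transposeInner_le (M : Matrix n n ℂ) : (transposeInner M).re ≤ ‖M‖ ^ 2 := by
  nlinarith [frobenius_norm_sub_transpose_sq M, sq_nonneg ‖M - Mᵀ‖]

lemma neg_frobenius_norm_sub_transpose_sq_div_four_le (M : Matrix n n ℂ) :
    -(‖M - Mᵀ‖ ^ 2 / 4) ≤ (transposeInner M).re := by
  nlinarith [frobenius_norm_sub_transpose_sq M, frobenius_norm_add_transpose_sq M,
    sq_nonneg ‖M + Mᵀ‖]

lemma frobenius_norm_vecMulVec_le (u : m → ℂ) (v : n → ℂ) :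
    ‖vecMulVec u v‖ ≤ ‖WithLp.toLp 2 u‖ * ‖WithLp.toLp 2 v‖ := by
  rw [vecMulVec_eq Unit, ← frobenius_norm_replicateCol (ι := Unit),
    ← frobenius_norm_replicateRow (ι := Unit)]
  exact frobenius_norm_mul _ _

lemma frobenius_norm_vecMulVec_sub_transpose_le (u v : n → ℂ) :
    ‖vecMulVec u v - (vecMulVec u v)ᵀ‖ ≤ √2 * (‖WithLp.toLp 2 u‖ * ‖WithLp.toLp 2 v‖) := by
  have hsq : ‖vecMulVec u v - (vecMulVec u v)ᵀ‖ ^ 2 ≤ 2 * ‖vecMulVec u v‖ ^ 2 := by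
    rw [frobenius_norm_sub_transpose_sq, transposeInner_vecMulVec, Complex.ofReal_re]
    linarith [Complex.normSq_nonneg (u ⬝ᵥ star v)]
  calc ‖vecMulVec u v - (vecMulVec u v)ᵀ‖ ≤ √2 * ‖vecMulVec u v‖ := by
        rw [← Real.sqrt_sq (norm_nonneg _), ← Real.sqrt_sq (norm_nonneg (vecMulVec u v)),
          ← Real.sqrt_mul zero_le_two]
        exact Real.sqrt_le_sqrt hsq
    _ ≤ _ := by gcongr; exact frobenius_norm_vecMulVec_le u v

lemma frobenius_norm_mul_sub_transpose_le (A : Matrix m n ℂ) (B : Matrix n m ℂ) :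
    ‖A * B - (A * B)ᵀ‖ ≤ √2 * (‖A‖ * ‖B‖) := by
  calc ‖A * B - (A * B)ᵀ‖
      = ‖∑ k, (vecMulVec (Aᵀ k) (B k) - (vecMulVec (Aᵀ k) (B k))ᵀ)‖ := by
        rw [mul_eq_sum_vecMulVec, transpose_sum, Finset.sum_sub_distrib]
        rfl
    _ ≤ ∑ k, √2 * (‖WithLp.toLp 2 (Aᵀ k)‖ * ‖WithLp.toLp 2 (B k)‖) :=
        (norm_sum_le _ _).trans
          (Finset.sum_le_sum fun k _ => frobenius_norm_vecMulVec_sub_transpose_le _ _)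
    _ ≤ √2 * (‖Aᵀ‖ * ‖B‖) := by
        rw [← Finset.mul_sum]
        gcongr
        refine (Real.sum_mul_le_sqrt_mul_sqrt _ _ _).trans_eq ?_
        rw [← frobenius_norm_sq_eq_sum_rows, ← frobenius_norm_sq_eq_sum_rows,
          Real.sqrt_sq (norm_nonneg _), Real.sqrt_sq (norm_nonneg _)]
    _ = √2 * (‖A‖ * ‖B‖) := by rw [frobenius_norm_transpose]

lemma re_transposeInner_mul_le (A : Matrix m n ℂ) (B : Matrix n m ℂ) :
    (transposeInner (A * B)).re ≤ ‖A‖ ^ 2 * ‖B‖ ^ 2 := by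
  rw [← mul_pow]
  exact (re_transposeInner_le _).trans
    (pow_le_pow_left₀ (norm_nonneg _) (frobenius_norm_mul A B) 2)

lemma neg_le_re_transposeInner_mul (A : Matrix m n ℂ) (B : Matrix n m ℂ) :
    -(‖A‖ ^ 2 * ‖B‖ ^ 2 / 2) ≤ (transposeInner (A * B)).re := by
  have h := pow_le_pow_left₀ (norm_nonneg _) (frobenius_norm_mul_sub_transpose_le A B) 2
  rw [mul_pow, Real.sq_sqrt zero_le_two, mul_pow] at h
  linarith [neg_frobenius_norm_sub_transpose_sq_div_four_le (A * B)]

lemma IsHermitian.posSemidef_of_re_nonneg {N : Matrix n n ℂ} (hN : N.IsHermitian)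
    (h : ∀ x, 0 ≤ (star x ⬝ᵥ N *ᵥ x).re) : N.PosSemidef :=
  .of_dotProduct_mulVec_nonneg hN fun x =>
    Complex.nonneg_iff.2 ⟨h x, (hN.im_star_dotProduct_mulVec_self x).symm⟩

lemma re_star_dotProduct_real_smul_one_mulVec [DecidableEq n] (c : ℝ) (x : n → ℂ) :
    (star x ⬝ᵥ ((c : ℂ) • (1 : Matrix n n ℂ)) *ᵥ x).re = c * (star x ⬝ᵥ x).re := by
  rw [smul_mulVec, one_mulVec, dotProduct_smul, smul_eq_mul, Complex.re_ofReal_mul]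

end Matrix

section PartialTranspose

variable {α β : Type*}

lemma ptB_sum {ι : Type*} (s : Finset ι) (A : ι → Matrix (α × β) (α × β) ℂ) :
    ptB (∑ i ∈ s, A i) = ∑ i ∈ s, ptB (A i) := by
  ext p q
  simp [ptB, Matrix.sum_apply]

lemma Matrix.IsHermitian.ptB {M : Matrix (α × β) (α × β) ℂ} (hM : M.IsHermitian) :
    (ptB M).IsHermitian := by
  ext p q
  exact congrFun (congrFun hM (p.1, q.2)) (q.1, p.2)

variable [Fintype α] [Fintype β]

lemma star_dotProduct_ptB_vecMulVec_mulVec (x ψ : α × β → ℂ) :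
    star x ⬝ᵥ (ptB (vecMulVec ψ (star ψ)) *ᵥ x)
      = transposeInner ((of fun a b => x (a, b))ᴴ * of fun a b => ψ (a, b)) := by
  simp only [transposeInner, dotProduct, mulVec, ptB, vecMulVec_apply, mul_apply,
    conjTranspose_apply, of_apply, Pi.star_apply, star_sum, star_mul', star_star,
    Fintype.sum_prod_type, Finset.mul_sum, Finset.sum_mul]
  rw [Finset.sum_comm]
  refine Finset.sum_congr rfl fun b _ => ?_
  rw [Finset.sum_comm_cycle]
  refine Finset.sum_congr rfl fun d _ => ?_
  rw [Finset.sum_comm]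
  exact Finset.sum_congr rfl fun c _ => Finset.sum_congr rfl fun a _ => by ring

lemma frobenius_norm_of_curry_sq (x : α × β → ℂ) :
    ‖of fun a b => x (a, b)‖ ^ 2 = (star x ⬝ᵥ x).re := by
  simp [frobenius_norm_sq_eq_sum, dotProduct, Fintype.sum_prod_type, Complex.sq_norm,
    Complex.normSq_apply, Complex.mul_re]

lemma re_trace_vecMulVec_star (ψ : α × β → ℂ) :
    (vecMulVec ψ (star ψ)).trace.re = ‖of fun a b => ψ (a, b)‖ ^ 2 := by
  rw [trace_vecMulVec, dotProduct_comm, frobenius_norm_of_curry_sq]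

variable [DecidableEq α] [DecidableEq β]

lemma posSemidef_trace_smul_one_sub_ptB_vecMulVec (ψ : α × β → ℂ) :
    ((((vecMulVec ψ (star ψ)).trace.re : ℝ) : ℂ) • 1
      - ptB (vecMulVec ψ (star ψ))).PosSemidef := by
  refine (isHermitian_real_smul_one _ |>.sub
    (posSemidef_vecMulVec_self_star ψ).isHermitian.ptB).posSemidef_of_re_nonneg fun x => ?_
  have h := re_transposeInner_mul_le (of fun a b => x (a, b))ᴴ (of fun a b => ψ (a, b))
  rw [frobenius_norm_conjTranspose, frobenius_norm_of_curry_sq] at h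
  rw [sub_mulVec, dotProduct_sub, Complex.sub_re, re_star_dotProduct_real_smul_one_mulVec,
    star_dotProduct_ptB_vecMulVec_mulVec, re_trace_vecMulVec_star]
  nlinarith

lemma posSemidef_ptB_vecMulVec_add_half_trace_smul_one (ψ : α × β → ℂ) :
    (ptB (vecMulVec ψ (star ψ))
      + (((vecMulVec ψ (star ψ)).trace.re / 2 : ℝ) : ℂ) • 1).PosSemidef := by
  refine ((posSemidef_vecMulVec_self_star ψ).isHermitian.ptB.add
    (isHermitian_real_smul_one _)).posSemidef_of_re_nonneg fun x => ?_
  have h := neg_le_re_transposeInner_mul (of fun a b => x (a, b))ᴴ (of fun a b => ψ (a, b))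
  rw [frobenius_norm_conjTranspose, frobenius_norm_of_curry_sq] at h
  rw [add_mulVec, dotProduct_add, Complex.add_re, re_star_dotProduct_real_smul_one_mulVec,
    star_dotProduct_ptB_vecMulVec_mulVec, re_trace_vecMulVec_star]
  nlinarith

end PartialTranspose

theorem stmt3_general {α β : Type*} [Fintype α] [Fintype β] [DecidableEq α] [DecidableEq β]
    (ρ : Matrix (α × β) (α × β) ℂ) (hρ : ρ.PosSemidef) :
    (((ρ.trace.re : ℝ) : ℂ) • 1 - ptB ρ).PosSemidef ∧
    (ptB ρ + ((ρ.trace.re / 2 : ℝ) : ℂ) • 1).PosSemidef := by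
  obtain ⟨r, ψ, rfl⟩ := posSemidef_iff_eq_sum_vecMulVec.mp hρ
  simp only [ptB_sum, trace_sum, Complex.re_sum, Finset.sum_div, Complex.ofReal_sum,
    Finset.sum_smul]
  rw [← Finset.sum_sub_distrib, ← Finset.sum_add_distrib]
  exact ⟨posSemidef_sum _ fun i _ => posSemidef_trace_smul_one_sub_ptB_vecMulVec (ψ i),
    posSemidef_sum _ fun i _ => posSemidef_ptB_vecMulVec_add_half_trace_smul_one (ψ i)⟩

theorem stmt3 {α β : Type*} [Fintype α] [Fintype β] [DecidableEq α] [DecidableEq β]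
    [Nonempty α] [Nonempty β]
    (ρ : Matrix (α × β) (α × β) ℂ) (hρ : ρ.PosSemidef) :
    (((ρ.trace.re : ℝ) : ℂ) • 1 - ptB ρ).PosSemidef ∧
    (ptB ρ + ((ρ.trace.re / 2 : ℝ) : ℂ) • 1).PosSemidef :=
  stmt3_general ρ hρ
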